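/- arXiv:1302.1435 — 2 statements merged into one kernel-verified Lean document; each statement's English description precedes it below -/
import Mathlib

section
/- For an invertible d×d real matrix A with singular values α_1(A) ≥ ... ≥ α_d(A) > 0, and for 0 ≤ s < d with integer part k, the singular value function φ^s(A) = α_1(A)···α_k(A)·α_{k+1}(A)^{s-k} is submultiplicative: φ^s(AB) ≤ φ^s(A)·φ^s(B) for all invertible d×d matrices A, B. -/
open scoped BigOperators

/-- The `l`-th (0-indexed, in decreasing order) singular value of a real `d × d` matrix,
i.e. the square roots of the eigenvalues of `Aᵀ * A`, listed in decreasing order. -/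
noncomputable def sval {d : ℕ} (A : Matrix (Fin d) (Fin d) ℝ) (l : ℕ) : ℝ :=
  (((Finset.univ.val.map (fun i : Fin d =>
      Real.sqrt ((Matrix.isHermitian_conjTranspose_mul_self A).eigenvalues i))).sort
      (· ≤ ·)).reverse).getD l 0

/-- The singular value function `φ^s`: for `0 ≤ s < d` with `k = ⌊s⌋`,
`φ^s(A) = α_1(A)···α_k(A)·α_{k+1}(A)^(s-k)`; for `s ≥ d`,
`φ^s(A) = (α_1(A)···α_d(A))^(s/d)`. (Here `sval A l` is `α_{l+1}(A)`.) -/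
noncomputable def phi {d : ℕ} (s : ℝ) (A : Matrix (Fin d) (Fin d) ℝ) : ℝ :=
  if s < d then
    (∏ l ∈ Finset.range ⌊s⌋₊, sval A l) * sval A ⌊s⌋₊ ^ (s - (⌊s⌋₊ : ℝ))
  else (∏ l ∈ Finset.range d, sval A l) ^ (s / d)

/-!
Write `P_m(T) = σ₀(T) ⋯ σ_{m-1}(T)`. With `k = ⌊s⌋` and `θ = s - k`, `φ^s = P_k^(1-θ) P_(k+1)^θ`,
so it suffices that every `P_m` is submultiplicative (Horn's inequality).

By Courant–Fischer, restricting `T` to a subspace does not increase its singular values, and on the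
span of the top `m` right singular vectors the first `m` of them are kept. Hence `P_m(T)` is the
largest volume factor `normDet` of `T` on an `m`-dimensional subspace. For the optimal subspace `W`
of `A B`, the volume factor of `A B` on `W` is that of `B` on `W` times that of `A` on `B W`, and
each of these is at most the corresponding `P_m`.
-/

open Module Submodule
open scoped InnerProductSpace

namespace LinearMap

variable {𝕜 E F G : Type*} [RCLike 𝕜]
  [NormedAddCommGroup E] [InnerProductSpace 𝕜 E] [FiniteDimensional 𝕜 E]
  [NormedAddCommGroup F] [InnerProductSpace 𝕜 F] [FiniteDimensional 𝕜 F]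
  [NormedAddCommGroup G] [InnerProductSpace 𝕜 G] [FiniteDimensional 𝕜 G]
  (T : E →ₗ[𝕜] F)

noncomputable def rightSingularVectors : OrthonormalBasis (Fin (finrank 𝕜 E)) 𝕜 E :=
  T.isSymmetric_adjoint_comp_self.eigenvectorBasis rfl

theorem sq_norm_apply_eq_sum (x : E) :
    ‖T x‖ ^ 2 = ∑ j : Fin (finrank 𝕜 E),
      T.singularValues j ^ 2 * ‖⟪T.rightSingularVectors j, x⟫_𝕜‖ ^ 2 := by
  have hM := T.isSymmetric_adjoint_comp_self
  have h : ‖T x‖ ^ 2 = RCLike.re ⟪(adjoint T ∘ₗ T) x, x⟫_𝕜 := by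
    rw [comp_apply, adjoint_inner_left, ← inner_self_eq_norm_sq (𝕜 := 𝕜)]
  rw [h, ← T.rightSingularVectors.repr.inner_map_map, PiLp.inner_apply, map_sum]
  refine Finset.sum_congr rfl fun j _ => ?_
  rw [← OrthonormalBasis.repr_apply_apply, rightSingularVectors,
    hM.eigenvectorBasis_apply_self_apply, T.sq_singularValues_fin rfl,
    RCLike.inner_apply, (starRingEnd 𝕜).map_mul, RCLike.conj_ofReal, mul_comm, mul_assoc,
    RCLike.conj_mul]
  norm_cast

theorem norm_apply_le_of_inner_eq_zero {i : ℕ} {x : E}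
    (hx : ∀ j : Fin (finrank 𝕜 E), (j : ℕ) < i → ⟪T.rightSingularVectors j, x⟫_𝕜 = 0) :
    ‖T x‖ ≤ T.singularValues i * ‖x‖ := by
  refine (pow_le_pow_iff_left₀ (norm_nonneg _)
    (mul_nonneg (T.singularValues_nonneg i) (norm_nonneg x)) two_ne_zero).mp ?_
  rw [mul_pow, T.sq_norm_apply_eq_sum, ← T.rightSingularVectors.sum_sq_norm_inner_right,
    Finset.mul_sum]
  refine Finset.sum_le_sum fun j _ => ?_
  rcases lt_or_ge (j : ℕ) i with hj | hj
  · simp [hx j hj]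
  · gcongr
    · exact T.singularValues_nonneg j
    · exact T.singularValues_antitone hj

theorem singularValues_mul_norm_le_of_inner_eq_zero {i : ℕ} {x : E}
    (hx : ∀ j : Fin (finrank 𝕜 E), i < (j : ℕ) → ⟪T.rightSingularVectors j, x⟫_𝕜 = 0) :
    T.singularValues i * ‖x‖ ≤ ‖T x‖ := by
  refine (pow_le_pow_iff_left₀ (mul_nonneg (T.singularValues_nonneg i) (norm_nonneg x))
    (norm_nonneg _) two_ne_zero).mp ?_
  rw [mul_pow, T.sq_norm_apply_eq_sum, ← T.rightSingularVectors.sum_sq_norm_inner_right,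
    Finset.mul_sum]
  refine Finset.sum_le_sum fun j _ => ?_
  rcases lt_or_ge i (j : ℕ) with hj | hj
  · simp [hx j hj]
  · gcongr
    · exact T.singularValues_nonneg i
    · exact T.singularValues_antitone hj

theorem le_singularValues_of_forall_mul_norm_le {i : ℕ} (U : Submodule 𝕜 E)
    (hU : i < finrank 𝕜 U) {c : ℝ} (hc : ∀ x ∈ U, c * ‖x‖ ≤ ‖T x‖) :
    c ≤ T.singularValues i := by
  have hi : i ≤ finrank 𝕜 E := hU.le.trans U.finrank_le
  -- `finrank U > i` gives `x ≠ 0` in `U` orthogonal to the first `i` right singular vectors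
  let b := T.rightSingularVectors.toBasis
  let coords : U →ₗ[𝕜] Fin i → 𝕜 := pi fun j => b.coord (Fin.castLE hi j) ∘ₗ U.subtype
  have hker : ker coords ≠ ⊥ := ker_ne_bot_of_finrank_lt (by rwa [finrank_fin_fun])
  obtain ⟨x, hx, hx0⟩ := (Submodule.ne_bot_iff _).mp hker
  have hxE : (x : E) ≠ 0 := by simpa using hx0
  have hle : ‖T x‖ ≤ T.singularValues i * ‖(x : E)‖ := by
    refine T.norm_apply_le_of_inner_eq_zero fun j hj => ?_
    have := congrFun (mem_ker.mp hx) ⟨j, hj⟩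
    simpa [coords, b, OrthonormalBasis.repr_apply_apply] using this
  exact le_of_mul_le_mul_right ((hc x x.2).trans hle) (norm_pos_iff.mpr hxE)

noncomputable def topSingularSubspace (k : ℕ) : Submodule 𝕜 E :=
  span 𝕜 (T.rightSingularVectors '' {j | (j : ℕ) < k})

theorem topSingularSubspace_mono {k l : ℕ} (h : k ≤ l) :
    T.topSingularSubspace k ≤ T.topSingularSubspace l :=
  span_mono (Set.image_mono fun _ hj => lt_of_lt_of_le hj h)

theorem finrank_topSingularSubspace {k : ℕ} (hk : k ≤ finrank 𝕜 E) :
    finrank 𝕜 (T.topSingularSubspace k) = k := by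
  have hli := T.rightSingularVectors.orthonormal.linearIndependent.comp _ Subtype.val_injective
      (ι' := {j : Fin (finrank 𝕜 E) | (j : ℕ) < k})
  rw [topSingularSubspace, Set.image_eq_range]
  refine (finrank_span_eq_card hli).trans ?_
  simp only [Fintype.card_subtype, Set.mem_ofPred_eq, Fin.card_filter_val_lt, min_eq_right hk]

theorem singularValues_mul_norm_le_of_mem_topSingularSubspace {i : ℕ} {x : E}
    (hx : x ∈ T.topSingularSubspace (i + 1)) : T.singularValues i * ‖x‖ ≤ ‖T x‖ := by
  refine T.singularValues_mul_norm_le_of_inner_eq_zero fun j hj => ?_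
  rw [topSingularSubspace, ← OrthonormalBasis.coe_toBasis, Basis.mem_span_image] at hx
  by_contra hne
  have hmem : (j : ℕ) < i + 1 := hx (by simpa [OrthonormalBasis.repr_apply_apply] using hne)
  omega

theorem singularValues_domRestrict_le (W : Submodule 𝕜 E) (i : ℕ) :
    (T.domRestrict W).singularValues i ≤ T.singularValues i := by
  by_cases hi : i < finrank 𝕜 W
  · let U := ((T.domRestrict W).topSingularSubspace (i + 1)).map W.subtype
    have hU : finrank 𝕜 U = i + 1 := by
      rw [finrank_map_subtype_eq, finrank_topSingularSubspace _ hi]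
    refine T.le_singularValues_of_forall_mul_norm_le U (by omega) fun x hx => ?_
    obtain ⟨w, hw, rfl⟩ := mem_map.mp hx
    exact (T.domRestrict W).singularValues_mul_norm_le_of_mem_topSingularSubspace hw
  · rw [singularValues_of_finrank_le _ (not_lt.mp hi)]
    exact T.singularValues_nonneg i

theorem singularValues_le_domRestrict_topSingularSubspace {i k : ℕ} (hi : i < k)
    (hk : k ≤ finrank 𝕜 E) :
    T.singularValues i ≤ (T.domRestrict (T.topSingularSubspace k)).singularValues i := by
  let W := T.topSingularSubspace k
  have hle : T.topSingularSubspace (i + 1) ≤ W := T.topSingularSubspace_mono hi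
  let U := (T.topSingularSubspace (i + 1)).comap W.subtype
  have hU : finrank 𝕜 U = i + 1 := by
    rw [(comapSubtypeEquivOfLe hle).finrank_eq, finrank_topSingularSubspace _ (by omega)]
  refine (T.domRestrict W).le_singularValues_of_forall_mul_norm_le U (by omega) fun x hx => ?_
  exact T.singularValues_mul_norm_le_of_mem_topSingularSubspace hx

theorem normDet_domRestrict_le (W : Submodule 𝕜 E) :
    (T.domRestrict W).normDet ≤ ∏ i ∈ Finset.range (finrank 𝕜 W), T.singularValues i := by
  rw [normDet_eq_prod_singularValues]
  exact Finset.prod_le_prod (fun i _ => singularValues_nonneg _ i)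
    fun i _ => T.singularValues_domRestrict_le W i

theorem normDet_domRestrict_topSingularSubspace {k : ℕ} (hk : k ≤ finrank 𝕜 E) :
    (T.domRestrict (T.topSingularSubspace k)).normDet =
      ∏ i ∈ Finset.range k, T.singularValues i := by
  have hW := T.finrank_topSingularSubspace hk
  refine le_antisymm ((T.normDet_domRestrict_le _).trans_eq (by rw [hW])) ?_
  rw [normDet_eq_prod_singularValues, hW]
  exact Finset.prod_le_prod (fun i _ => T.singularValues_nonneg i)
    fun i hi => T.singularValues_le_domRestrict_topSingularSubspace (Finset.mem_range.mp hi) hk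

theorem prod_singularValues_comp_le (S : F →ₗ[𝕜] G) {k : ℕ} (hk : k ≤ finrank 𝕜 E) :
    ∏ i ∈ Finset.range k, (S ∘ₗ T).singularValues i ≤
      (∏ i ∈ Finset.range k, S.singularValues i) * ∏ i ∈ Finset.range k, T.singularValues i := by
  let W := (S ∘ₗ T).topSingularSubspace k
  let TW := T.domRestrict W
  have hsplit : ((S ∘ₗ T).domRestrict W).normDet = (S.domRestrict TW.range).normDet * TW.normDet :=
    normDet_comp TW S
  rw [← (S ∘ₗ T).normDet_domRestrict_topSingularSubspace hk, hsplit]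
  have hTW : TW.normDet ≤ ∏ i ∈ Finset.range k, T.singularValues i :=
    (T.normDet_domRestrict_le W).trans_eq (by rw [finrank_topSingularSubspace _ hk])
  rcases eq_or_ne TW.normDet 0 with h0 | h0
  · rw [h0, mul_zero]
    exact mul_nonneg (Finset.prod_nonneg fun i _ => S.singularValues_nonneg i)
      (Finset.prod_nonneg fun i _ => T.singularValues_nonneg i)
  have hker : ker TW = ⊥ := by
    by_contra h
    exact h0 (normDet_eq_zero_iff_ker_ne_bot.mpr h)
  have hrange : finrank 𝕜 TW.range = k := by
    rw [finrank_range_of_inj (ker_eq_bot.mp hker), finrank_topSingularSubspace _ hk]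
  have hS : (S.domRestrict TW.range).normDet ≤ ∏ i ∈ Finset.range k, S.singularValues i :=
    (S.normDet_domRestrict_le _).trans_eq (by rw [hrange])
  exact mul_le_mul hS hTW (normDet_nonneg _)
    (Finset.prod_nonneg fun i _ => S.singularValues_nonneg i)

end LinearMap

theorem Antitone.reverse_sort_map_univ_eq_ofFn {α : Type*} [LinearOrder α] {n : ℕ}
    {f : Fin n → α} (hf : Antitone f) :
    ((Finset.univ.val.map f).sort (· ≤ ·)).reverse = List.ofFn f := by
  apply List.Perm.eq_of_pairwise' (r := (· ≥ ·))
  · exact List.pairwise_reverse.mpr (Multiset.pairwise_sort _ _)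
  · exact List.pairwise_ofFn.mpr fun _ _ h => hf h.le
  · rw [← Multiset.coe_eq_coe, Multiset.coe_reverse, Multiset.sort_eq, Fin.univ_val_map]

open Matrix

section

variable {d : ℕ}

theorem sval_eq_singularValues (A : Matrix (Fin d) (Fin d) ℝ) (l : ℕ) :
    sval A l = (toEuclideanLin A).singularValues l := by
  set T := toEuclideanLin A
  set hAA := isHermitian_conjTranspose_mul_self A
  have heig : hAA.eigenvalues₀ =
      T.isSymmetric_adjoint_comp_self.eigenvalues finrank_euclideanSpace := by
    unfold IsHermitian.eigenvalues₀
    congr 1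
    rw [toLpLin_mul 2 2 2, toEuclideanLin_conjTranspose_eq_adjoint]
  have hanti : Antitone fun i => √(hAA.eigenvalues₀ i) :=
    fun i j h => Real.sqrt_le_sqrt (hAA.eigenvalues₀_antitone h)
  have hmap : (Finset.univ.val.map fun i : Fin d => √(hAA.eigenvalues i)) =
      Finset.univ.val.map fun i => √(hAA.eigenvalues₀ i) := by
    rw [← Multiset.map_univ_val_equiv
      (Fintype.equivOfCardEq (Fintype.card_fin (Fintype.card (Fin d)))).symm, Multiset.map_map]
    rfl
  rw [sval, hmap, hanti.reverse_sort_map_univ_eq_ofFn, List.getD_eq_getElem?_getD,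
    List.getElem?_ofFn]
  by_cases hl : l < Fintype.card (Fin d)
  · rw [dif_pos hl, Option.getD_some, T.singularValues_of_lt finrank_euclideanSpace hl, heig]
  · rw [dif_neg hl, Option.getD_none, T.singularValues_of_finrank_le (by simpa using hl)]

theorem sval_nonneg (A : Matrix (Fin d) (Fin d) ℝ) (l : ℕ) : 0 ≤ sval A l :=
  sval_eq_singularValues A l ▸ LinearMap.singularValues_nonneg _ l

theorem prod_sval_mul_le {k : ℕ} (hk : k ≤ d) (A B : Matrix (Fin d) (Fin d) ℝ) :
    ∏ l ∈ Finset.range k, sval (A * B) l ≤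
      (∏ l ∈ Finset.range k, sval A l) * ∏ l ∈ Finset.range k, sval B l := by
  simp only [sval_eq_singularValues, toLpLin_mul 2 2 2]
  exact (toEuclideanLin B).prod_singularValues_comp_le (toEuclideanLin A)
    (hk.trans_eq finrank_euclideanSpace_fin.symm)

theorem phi_eq_rpow_mul_rpow {s : ℝ} (hsd : s < d) (A : Matrix (Fin d) (Fin d) ℝ) :
    phi s A = (∏ l ∈ Finset.range ⌊s⌋₊, sval A l) ^ (1 - (s - ⌊s⌋₊)) *
      (∏ l ∈ Finset.range (⌊s⌋₊ + 1), sval A l) ^ (s - ⌊s⌋₊) := by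
  have hP : 0 ≤ ∏ l ∈ Finset.range ⌊s⌋₊, sval A l := Finset.prod_nonneg fun l _ => sval_nonneg A l
  rw [phi, if_pos hsd, Finset.prod_range_succ, Real.mul_rpow hP (sval_nonneg A _), ← mul_assoc,
    ← Real.rpow_add' hP (by norm_num), sub_add_cancel, Real.rpow_one]

end

theorem phi_submultiplicative_general (d : ℕ) (s : ℝ) (hs : 0 ≤ s) (hsd : s < d)
    (A B : Matrix (Fin d) (Fin d) ℝ) :
    phi s (A * B) ≤ phi s A * phi s B := by
  simp only [phi_eq_rpow_mul_rpow hsd]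
  set k := ⌊s⌋₊
  set θ := s - k
  have hk : k + 1 ≤ d := (Nat.floor_lt hs).mpr hsd
  have hθ : 0 ≤ θ := sub_nonneg.mpr (Nat.floor_le hs)
  have hθ' : 0 ≤ 1 - θ := by linarith [Nat.lt_floor_add_one s]
  have hP : ∀ (M : Matrix (Fin d) (Fin d) ℝ) m, 0 ≤ ∏ l ∈ Finset.range m, sval M l :=
    fun M m => Finset.prod_nonneg fun l _ => sval_nonneg M l
  calc _ ≤ ((∏ l ∈ Finset.range k, sval A l) * ∏ l ∈ Finset.range k, sval B l) ^ (1 - θ) *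
          ((∏ l ∈ Finset.range (k + 1), sval A l) * ∏ l ∈ Finset.range (k + 1), sval B l) ^ θ :=
        mul_le_mul (Real.rpow_le_rpow (hP _ _) (prod_sval_mul_le (by omega) A B) hθ')
          (Real.rpow_le_rpow (hP _ _) (prod_sval_mul_le hk A B) hθ) (Real.rpow_nonneg (hP _ _) _)
          (Real.rpow_nonneg (mul_nonneg (hP _ _) (hP _ _)) _)
    _ = _ := by rw [Real.mul_rpow (hP _ _) (hP _ _), Real.mul_rpow (hP _ _) (hP _ _)]; ring

/-- the singular value function is submultiplicative for `0 ≤ s < d`. -/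
theorem phi_submultiplicative (d : ℕ) (s : ℝ) (hs : 0 ≤ s) (hsd : s < d)
    (A B : Matrix (Fin d) (Fin d) ℝ) (hA : IsUnit A.det) (hB : IsUnit B.det) :
    phi s (A * B) ≤ phi s A * phi s B :=
  phi_submultiplicative_general d s hs hsd A B
end

section
/- Let μ be a Borel probability measure on I^ℕ, θ : I^ℕ → ℝ^d a continuous map, and P_m = {[i] : i ∈ I^m} the partition into cylinders of length m with entropy H_μ(P_m) < ∞. Define G(i) = -inf_{r>0} log ( μ(B^θ(i,r) ∩ [i|_m]) / μ(B^θ(i,r)) ), where B^θ(i,r) = θ^{-1}(B(θ(i),r)). Then ∫ G dμ ≤ H_μ(P_m) + log C + 1 < ∞, where C is the Besicovitch covering constant of ℝ^d. -/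
open scoped BigOperators ENNReal
open MeasureTheory Filter

/-- Product `A_{w 0} * ⋯ * A_{w (n-1)}` along a finite word `w ∈ I^n`. -/
noncomputable def wordProd {d : ℕ} {I : Type*} (A : I → Matrix (Fin d) (Fin d) ℝ)
    {n : ℕ} (w : Fin n → I) : Matrix (Fin d) (Fin d) ℝ :=
  (List.ofFn fun k => A (w k)).prod

/-- Product `A_{i_1} ⋯ A_{i_n}` along the first `n` letters of an infinite word. -/
noncomputable def seqProd {d : ℕ} {I : Type*} (A : I → Matrix (Fin d) (Fin d) ℝ)
    (i : ℕ → I) (n : ℕ) : Matrix (Fin d) (Fin d) ℝ :=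
  (List.ofFn fun k : Fin n => A (i k)).prod

/-- The cylinder `[i|_n]` of sequences agreeing with `i` in the first `n` coordinates. -/
def cyl {I : Type*} (i : ℕ → I) (n : ℕ) : Set (ℕ → I) := {j | ∀ k < n, j k = i k}

/-- The cylinder determined by a finite word `w ∈ I^m`. -/
def cylW {I : Type*} {m : ℕ} (w : Fin m → I) : Set (ℕ → I) := {j | ∀ k : Fin m, j k = w k}

/-- The left shift on `I^ℕ`. -/
def shift {I : Type*} (j : ℕ → I) : ℕ → I := fun k => j (k + 1)

/-!
Fix a cylinder `[w]` and push `μ|[w]` and `μ` forward by `θ` to measures `κ`, `ν` on `ℝ^d`.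
On `[w]`, `G(i) ≤ sup_{r>0} -log (κ B(x,r) / ν B(x,r))` with `x = θ i`. Where this exceeds `s`,
some ball around `x` has `κ B ≤ e^{-s} ν B`; the Besicovitch covering theorem sorts such balls into
`N` disjoint families, so `κ {G > s} ≤ N e^{-s}`. The layer-cake formula with
`κ {G > s} ≤ min (μ [w], N e^{-s})` gives `∫_{[w]} G dμ ≤ -μ[w] log μ[w] + μ[w] log N + μ[w]`,
and summing over `w` gives `H_μ(P_m) + log N + 1`.
-/

open Set Metric Topology Function

section LayerCake

variable {α : Type*} [MeasurableSpace α] {μ : Measure α}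

lemma lintegral_Ioi_min_mul_exp_neg_le {a C : ℝ} (ha : 0 < a) (haC : a ≤ C) :
    ∫⁻ t in Ioi (0 : ℝ), min (ENNReal.ofReal a) (ENNReal.ofReal (C * Real.exp (-t)))
      ≤ ENNReal.ofReal (Real.negMulLog a + a * Real.log C + a) := by
  -- the two terms of the minimum cross at `t₀ = log (C / a)`
  set t₀ := Real.log (C / a)
  have hC : 0 < C := ha.trans_le haC
  have ht₀ : 0 ≤ t₀ := Real.log_nonneg ((one_le_div ha).2 haC)
  have head : ∫⁻ t in Ioc 0 t₀, min (ENNReal.ofReal a) (ENNReal.ofReal (C * Real.exp (-t)))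
      ≤ ENNReal.ofReal a * ENNReal.ofReal t₀ :=
    calc _ ≤ ∫⁻ _ in Ioc 0 t₀, ENNReal.ofReal a := lintegral_mono fun _ => min_le_left _ _
      _ = ENNReal.ofReal a * ENNReal.ofReal t₀ := by
        rw [setLIntegral_const, Real.volume_Ioc, sub_zero]
  have tail : ∫⁻ t in Ioi t₀, min (ENNReal.ofReal a) (ENNReal.ofReal (C * Real.exp (-t)))
      ≤ ENNReal.ofReal a :=
    calc _ ≤ ∫⁻ t in Ioi t₀, ENNReal.ofReal (C * Real.exp (-t)) :=
          lintegral_mono fun _ => min_le_right _ _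
      _ = ENNReal.ofReal (∫ t in Ioi t₀, C * Real.exp (-t)) :=
          (ofReal_integral_eq_lintegral_ofReal
            (by simpa using (exp_neg_integrableOn_Ioi t₀ one_pos).const_mul C)
            (ae_of_all _ fun _ => by positivity)).symm
      _ = ENNReal.ofReal a := by
        rw [integral_const_mul, integral_exp_neg_Ioi, Real.exp_neg, Real.exp_log (div_pos hC ha)]
        field_simp
  rw [← Ioc_union_Ioi_eq_Ioi ht₀, lintegral_union measurableSet_Ioi Ioc_disjoint_Ioi_same]
  refine (add_le_add head tail).trans_eq ?_
  rw [← ENNReal.ofReal_mul ha.le, ← ENNReal.ofReal_add (by positivity) ha.le]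
  simp only [t₀, Real.log_div hC.ne' ha.ne', Real.negMulLog]
  ring_nf

lemma ae_ne_top_of_measure_lt_le_mul_exp {f : α → ℝ≥0∞} {C : ℝ}
    (htail : ∀ s > 0, μ {x | ENNReal.ofReal s < f x} ≤ ENNReal.ofReal (C * Real.exp (-s))) :
    ∀ᵐ x ∂μ, f x ≠ ∞ := by
  have hlim : Tendsto (fun s => ENNReal.ofReal (C * Real.exp (-s))) atTop (𝓝 0) := by
    simpa using ENNReal.tendsto_ofReal (Real.tendsto_exp_neg_atTop_nhds_zero.const_mul C)
  rw [ae_iff]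
  refine le_antisymm (ge_of_tendsto hlim ?_) zero_le
  filter_upwards [eventually_gt_atTop 0] with s hs
  refine (measure_mono fun x (hx : ¬f x ≠ ∞) => ?_).trans (htail s hs)
  simp [not_not.1 hx]

theorem lintegral_le_of_measure_lt_le_mul_exp [IsFiniteMeasure μ] {f : α → ℝ≥0∞}
    (hf : Measurable f) {C : ℝ} (hμC : (μ univ).toReal ≤ C)
    (htail : ∀ s > 0, μ {x | ENNReal.ofReal s < f x} ≤ ENNReal.ofReal (C * Real.exp (-s))) :
    ∫⁻ x, f x ∂μ ≤ ENNReal.ofReal (Real.negMulLog (μ univ).toReal +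
      (μ univ).toReal * Real.log C + (μ univ).toReal) := by
  rcases ENNReal.toReal_nonneg.eq_or_lt with hμ | hμ
  · have : μ = 0 := by
      rwa [eq_comm, ENNReal.toReal_eq_zero_iff, or_iff_left (measure_ne_top μ univ),
        Measure.measure_univ_eq_zero] at hμ
    simp [this]
  calc ∫⁻ x, f x ∂μ = ∫⁻ x, ENNReal.ofReal (f x).toReal ∂μ :=
        lintegral_congr_ae <| (ae_ne_top_of_measure_lt_le_mul_exp htail).mono
          fun x hx => (ENNReal.ofReal_toReal hx).symm
    _ = ∫⁻ t in Ioi 0, μ {x | t < (f x).toReal} :=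
        lintegral_eq_lintegral_meas_lt μ (ae_of_all _ fun _ => ENNReal.toReal_nonneg)
          hf.ennreal_toReal.aemeasurable
    _ ≤ ∫⁻ t in Ioi 0,
          min (ENNReal.ofReal (μ univ).toReal) (ENNReal.ofReal (C * Real.exp (-t))) := by
        refine setLIntegral_mono (by fun_prop) fun t (ht : 0 < t) => le_min ?_ ?_
        · rw [ENNReal.ofReal_toReal (measure_ne_top _ _)]
          exact measure_mono (subset_univ _)
        · refine (measure_mono fun x (hx : t < (f x).toReal) => ?_).trans (htail t ht)
          exact ((ENNReal.ofReal_lt_ofReal_iff (ht.trans hx)).2 hx).trans_le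
            ENNReal.ofReal_toReal_le
    _ ≤ _ := lintegral_Ioi_min_mul_exp_neg_le hμ hμC

end LayerCake

lemma ofReal_neg_iInf_le {ι : Sort*} [Nonempty ι] {f : ι → ℝ} {S : ℝ≥0∞}
    (h : ∀ i, ENNReal.ofReal (-f i) ≤ S) : ENNReal.ofReal (-⨅ i, f i) ≤ S := by
  rcases eq_or_ne S ∞ with rfl | hS
  · exact le_top
  have hf : ∀ i, -S.toReal ≤ f i := fun i => by
    linarith [(ENNReal.ofReal_le_iff_le_toReal hS).1 (h i)]
  exact (ENNReal.ofReal_le_iff_le_toReal hS).2 (by linarith [le_ciInf hf])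

lemma le_ofReal_exp_mul_of_log_div_lt {a b : ℝ≥0∞} (ha : a ≠ ∞) (hb : b ≠ ∞) {s : ℝ}
    (hs : 0 < s) (h : Real.log (a.toReal / b.toReal) < -s) :
    a ≤ ENNReal.ofReal (Real.exp (-s)) * b := by
  have hpos : 0 < a.toReal / b.toReal := by
    by_contra! h0
    rw [le_antisymm h0 (by positivity), Real.log_zero] at h
    linarith
  have hb0 : 0 < b.toReal := by
    by_contra! h0
    rw [le_antisymm h0 ENNReal.toReal_nonneg, div_zero] at hpos
    exact hpos.false
  have hab : a.toReal ≤ Real.exp (-s) * b.toReal :=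
    ((div_lt_iff₀ hb0).1 ((Real.log_lt_iff_lt_exp hpos).1 h)).le
  rw [← ENNReal.ofReal_toReal ha, ← ENNReal.ofReal_toReal hb,
    ← ENNReal.ofReal_mul (Real.exp_pos _).le]
  exact ENNReal.ofReal_le_ofReal hab

section ClosedBall

variable {X : Type*} [MetricSpace X] [MeasurableSpace X] [OpensMeasurableSpace X]

lemma tendsto_measure_closedBall_nhdsGT (ρ : Measure X) [IsFiniteMeasure ρ] (x : X) (r : ℝ) :
    Tendsto (fun v => ρ (closedBall x v)) (𝓝[>] r) (𝓝 (ρ (closedBall x r))) := by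
  have := tendsto_measure_biInter_gt (μ := ρ) (s := closedBall x) (a := r)
    (fun _ _ => measurableSet_closedBall.nullMeasurableSet)
    (fun _ _ _ hij => closedBall_subset_closedBall hij) ⟨r + 1, by linarith, measure_ne_top _ _⟩
  rwa [biInter_gt_closedBall] at this

lemma upperSemicontinuous_measure_closedBall (ρ : Measure X) [IsFiniteMeasure ρ] (r : ℝ) :
    UpperSemicontinuous fun x => ρ (closedBall x r) := by
  intro x c hc
  obtain ⟨u, hru, hu⟩ := mem_nhdsGT_iff_exists_Ioc_subset.1
    ((tendsto_measure_closedBall_nhdsGT ρ x r).eventually (gt_mem_nhds hc))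
  filter_upwards [ball_mem_nhds x (sub_pos.2 hru)] with y hy
  refine (measure_mono (closedBall_subset_closedBall' ?_)).trans_lt (hu ⟨hru, le_rfl⟩)
  linarith [mem_ball.1 hy]

/-- Taking rational radii only makes this measurable. -/
noncomputable def localInfo (κ ν : Measure X) (x : X) : ℝ≥0∞ :=
  ⨆ q : {q : ℚ // 0 < q}, ENNReal.ofReal
    (-Real.log ((κ (closedBall x (q : ℚ))).toReal / (ν (closedBall x (q : ℚ))).toReal))

lemma measurable_localInfo (κ ν : Measure X) [IsFiniteMeasure κ] [IsFiniteMeasure ν] :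
    Measurable (localInfo κ ν) :=
  .iSup fun _ => ENNReal.measurable_ofReal.comp <| .neg <| Real.measurable_log.comp <|
    (upperSemicontinuous_measure_closedBall κ _).measurable.ennreal_toReal.div
      (upperSemicontinuous_measure_closedBall ν _).measurable.ennreal_toReal

lemma ofReal_neg_log_div_le_localInfo (κ ν : Measure X) [IsFiniteMeasure κ] [IsFiniteMeasure ν]
    (x : X) {r : ℝ} (hr : 0 < r) :
    ENNReal.ofReal (-Real.log ((κ (closedBall x r)).toReal / (ν (closedBall x r)).toReal))
      ≤ localInfo κ ν x := by
  set g : ℝ → ℝ≥0∞ := fun v =>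
    ENNReal.ofReal (-Real.log ((κ (closedBall x v)).toReal / (ν (closedBall x v)).toReal))
  by_cases hpos : 0 < (κ (closedBall x r)).toReal / (ν (closedBall x r)).toReal
  swap
  · simp [le_antisymm (not_lt.1 hpos) (by positivity)]
  have hν : (ν (closedBall x r)).toReal ≠ 0 := fun h => by simp [h] at hpos
  have hg : Tendsto g (𝓝[>] r) (𝓝 (g r)) := by
    refine ENNReal.tendsto_ofReal (Tendsto.neg (Tendsto.log (Tendsto.div ?_ ?_ hν) hpos.ne'))
    · exact (ENNReal.tendsto_toReal (measure_ne_top κ _)).comp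
        (tendsto_measure_closedBall_nhdsGT κ x r)
    · exact (ENNReal.tendsto_toReal (measure_ne_top ν _)).comp
        (tendsto_measure_closedBall_nhdsGT ν x r)
  -- `g` is right-continuous at `r`, so rational radii slightly above `r` do as well
  refine le_of_forall_lt fun c hc => ?_
  obtain ⟨u, hru, hu⟩ := mem_nhdsGT_iff_exists_Ioc_subset.1 (hg.eventually (lt_mem_nhds hc))
  obtain ⟨q, hrq, hqu⟩ := exists_rat_btwn (mem_Ioi.1 hru)
  exact (hu ⟨hrq, hqu.le⟩).trans_le
    (le_iSup_of_le (f := fun q : {q : ℚ // 0 < q} => g (q : ℚ))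
      ⟨q, by exact_mod_cast hr.trans hrq⟩ le_rfl)

lemma ofReal_neg_iInf_log_div_le_localInfo (κ ν : Measure X) [IsFiniteMeasure κ]
    [IsFiniteMeasure ν] (x : X) :
    ENNReal.ofReal (-⨅ r : {r : ℝ // 0 < r},
        Real.log ((κ (closedBall x r)).toReal / (ν (closedBall x r)).toReal))
      ≤ localInfo κ ν x :=
  haveI : Nonempty {r : ℝ // 0 < r} := ⟨⟨1, one_pos⟩⟩
  ofReal_neg_iInf_le fun r => ofReal_neg_log_div_le_localInfo κ ν x r.2

end ClosedBall

section Besicovitch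

variable {X : Type*} [MetricSpace X] [MeasurableSpace X] [OpensMeasurableSpace X]
  [SecondCountableTopology X] {N : ℕ} {τ : ℝ}

lemma Besicovitch.measure_le_of_forall_closedBall_le_of_le (hτ : 1 < τ)
    (hN : IsEmpty (Besicovitch.SatelliteConfig X N τ)) (κ ν : Measure X) {t : ℝ≥0∞} {R : ℝ}
    {S : Set X} (hS : ∀ x ∈ S, ∃ r ∈ Ioc 0 R, κ (closedBall x r) ≤ t * ν (closedBall x r)) :
    κ S ≤ N * t * ν univ := by
  choose! r hr hrκ using hS
  let p : Besicovitch.BallPackage S X :=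
    { c := (↑), r := fun x => r x, rpos := fun x => (hr x x.2).1, r_bound := R,
      r_le := fun x => (hr x x.2).2 }
  obtain ⟨s, hdisj, hcov⟩ := Besicovitch.exist_disjoint_covering_families hτ hN p
  have family_le : ∀ k, κ (⋃ j ∈ s k, ball (p.c j) (p.r j)) ≤ t * ν univ := fun k => by
    have hcount : (s k).Countable :=
      ((hdisj k).mono fun _ => ball_subset_closedBall).countable_of_isOpen (fun _ _ => isOpen_ball)
        fun j _ => ⟨p.c j, mem_ball_self (p.rpos j)⟩
    calc κ (⋃ j ∈ s k, ball (p.c j) (p.r j))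
        ≤ ∑' j : s k, t * ν (closedBall (p.c j) (p.r j)) :=
          (measure_biUnion_le κ hcount _).trans <| ENNReal.tsum_le_tsum fun j =>
            (measure_mono ball_subset_closedBall).trans (hrκ _ (j : S).2)
      _ = t * ν (⋃ j ∈ s k, closedBall (p.c j) (p.r j)) := by
          rw [ENNReal.tsum_mul_left, measure_biUnion hcount (hdisj k)
            fun _ _ => measurableSet_closedBall]
      _ ≤ t * ν univ := by gcongr; exact subset_univ _
  calc κ S ≤ κ (⋃ k : Fin N, ⋃ j ∈ s k, ball (p.c j) (p.r j)) :=
        measure_mono (Subtype.range_coe.symm.trans_subset hcov)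
    _ ≤ ∑ k : Fin N, κ (⋃ j ∈ s k, ball (p.c j) (p.r j)) := measure_iUnion_fintype_le _ _
    _ ≤ ∑ _k : Fin N, t * ν univ := Finset.sum_le_sum fun k _ => family_le k
    _ = N * t * ν univ := by simp [mul_assoc]

lemma Besicovitch.measure_le_of_forall_closedBall_le (hτ : 1 < τ)
    (hN : IsEmpty (Besicovitch.SatelliteConfig X N τ)) (κ ν : Measure X) {t : ℝ≥0∞}
    {S : Set X} (hS : ∀ x ∈ S, ∃ r > 0, κ (closedBall x r) ≤ t * ν (closedBall x r)) :
    κ S ≤ N * t * ν univ := by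
  choose! r hr hrκ using hS
  have hS : S = ⋃ n : ℕ, {x ∈ S | r x ≤ n} := by
    ext x
    simpa using fun hx => exists_nat_ge (r x)
  have hmono : Monotone fun n : ℕ => {x ∈ S | r x ≤ n} := fun m n hmn x hx =>
    ⟨hx.1, hx.2.trans (by exact_mod_cast hmn)⟩
  rw [hS, hmono.measure_iUnion]
  exact iSup_le fun n => measure_le_of_forall_closedBall_le_of_le hτ hN κ ν
    fun x hx => ⟨r x, ⟨hr x hx.1, hx.2⟩, hrκ x hx.1⟩

lemma measure_lt_localInfo_le (hτ : 1 < τ) (hN : IsEmpty (Besicovitch.SatelliteConfig X N τ))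
    (κ ν : Measure X) [IsFiniteMeasure κ] [IsProbabilityMeasure ν] {s : ℝ} (hs : 0 < s) :
    κ {x | ENNReal.ofReal s < localInfo κ ν x} ≤ ENNReal.ofReal (N * Real.exp (-s)) := by
  calc κ {x | ENNReal.ofReal s < localInfo κ ν x}
      ≤ N * ENNReal.ofReal (Real.exp (-s)) * ν univ := by
        refine Besicovitch.measure_le_of_forall_closedBall_le hτ hN κ ν
          fun x (hx : ENNReal.ofReal s < localInfo κ ν x) => ?_
        obtain ⟨q, hq⟩ := lt_iSup_iff.1 hx
        refine ⟨(q : ℚ), by exact_mod_cast q.2, le_ofReal_exp_mul_of_log_div_lt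
          (measure_ne_top _ _) (measure_ne_top _ _) hs ?_⟩
        linarith [(ENNReal.ofReal_lt_ofReal_iff_of_nonneg hs.le).1 hq]
    _ = ENNReal.ofReal (N * Real.exp (-s)) := by
        rw [measure_univ, mul_one, ENNReal.ofReal_mul (Nat.cast_nonneg _), ENNReal.ofReal_natCast]

theorem lintegral_localInfo_le (hτ : 1 < τ) (hN : IsEmpty (Besicovitch.SatelliteConfig X N τ))
    {C : ℝ} (hNC : N ≤ C) (κ ν : Measure X) [IsFiniteMeasure κ] [IsProbabilityMeasure ν]
    (hκC : (κ univ).toReal ≤ C) :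
    ∫⁻ x, localInfo κ ν x ∂κ ≤ ENNReal.ofReal (Real.negMulLog (κ univ).toReal +
      (κ univ).toReal * Real.log C + (κ univ).toReal) :=
  lintegral_le_of_measure_lt_le_mul_exp (measurable_localInfo κ ν) hκC fun _ hs =>
    (measure_lt_localInfo_le hτ hN κ ν hs).trans <|
      ENNReal.ofReal_le_ofReal (mul_le_mul_of_nonneg_right hNC (Real.exp_pos _).le)

end Besicovitch

lemma tsum_ofReal_negMulLog_add_mul_add {ι : Type*} {a : ι → ℝ} (ha0 : ∀ i, 0 ≤ a i)
    (ha : HasSum a 1) (hH : Summable fun i => Real.negMulLog (a i)) {c : ℝ} (hc : 0 ≤ c) :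
    ∑' i, ENNReal.ofReal (Real.negMulLog (a i) + a i * c + a i)
      = ENNReal.ofReal ((∑' i, Real.negMulLog (a i)) + c + 1) := by
  have hterm : ∀ i, 0 ≤ Real.negMulLog (a i) + a i * c + a i := fun i => by
    have := Real.negMulLog_nonneg (ha0 i) (le_hasSum ha i fun j _ => ha0 j)
    have := ha0 i
    positivity
  have hHc := hH.add (ha.summable.mul_right c)
  rw [← ENNReal.ofReal_tsum_of_nonneg hterm (hHc.add ha.summable), hHc.tsum_add ha.summable,
    hH.tsum_add (ha.summable.mul_right c), tsum_mul_right, ha.tsum_eq, one_mul]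

section Cylinder

variable {I : Type*} {m : ℕ}

lemma measurableSet_cylW [MeasurableSpace I] [MeasurableSingletonClass I] (w : Fin m → I) :
    MeasurableSet (cylW w) := by
  have : cylW w = ⋂ k : Fin m, (fun j : ℕ → I => j k) ⁻¹' {w k} := by
    ext j
    simp [cylW]
  rw [this]
  exact .iInter fun k => measurable_pi_apply (k : ℕ) (measurableSet_singleton (w k))

lemma pairwise_disjoint_cylW : Pairwise (Disjoint on fun w : Fin m → I => cylW w) :=
  fun _ _ hww' => disjoint_left.2 fun _ hj hj' =>
    hww' (funext fun k => (hj k).symm.trans (hj' k))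

lemma iUnion_cylW : ⋃ w : Fin m → I, cylW w = univ :=
  eq_univ_of_forall fun j => mem_iUnion.2 ⟨fun k => j k, fun _ => rfl⟩

lemma cyl_eq_cylW {w : Fin m → I} {i : ℕ → I} (hi : i ∈ cylW w) : cyl i m = cylW w := by
  ext j
  exact ⟨fun hj k => (hj k k.2).trans (hi k), fun hj k hk => (hj ⟨k, hk⟩).trans (hi ⟨k, hk⟩).symm⟩

variable [MeasurableSpace I] [MeasurableSingletonClass I] [Countable I]

lemma hasSum_toReal_measure_cylW (μ : Measure (ℕ → I)) [IsProbabilityMeasure μ] :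
    HasSum (fun w : Fin m → I => (μ (cylW w)).toReal) 1 := by
  have h : ∑' w : Fin m → I, μ (cylW w) = 1 := by
    rw [← measure_iUnion pairwise_disjoint_cylW measurableSet_cylW, iUnion_cylW, measure_univ]
  convert ENNReal.hasSum_toReal (h ▸ ENNReal.one_ne_top)
  rw [← ENNReal.tsum_toReal_eq fun _ => measure_ne_top _ _, h, ENNReal.toReal_one]

lemma lintegral_eq_tsum_setLIntegral_cylW (μ : Measure (ℕ → I)) (f : (ℕ → I) → ℝ≥0∞) :
    ∫⁻ i, f i ∂μ = ∑' w : Fin m → I, ∫⁻ i in cylW w, f i ∂μ := by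
  rw [← lintegral_iUnion measurableSet_cylW pairwise_disjoint_cylW, iUnion_cylW,
    Measure.restrict_univ]

end Cylinder

section Info

variable {I X : Type*} [MeasurableSpace I] [MetricSpace X] [MeasurableSpace X]
  [OpensMeasurableSpace X] {m : ℕ}

/-- The function `G` of the statement. -/
noncomputable def infoFun (μ : Measure (ℕ → I)) (θ : (ℕ → I) → X) (m : ℕ) (i : ℕ → I) : ℝ≥0∞ :=
  ENNReal.ofReal (-(⨅ r : {r : ℝ // 0 < r},
    Real.log ((μ (θ ⁻¹' closedBall (θ i) r ∩ cyl i m)).toReal /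
      (μ (θ ⁻¹' closedBall (θ i) r)).toReal)))

lemma infoFun_le_localInfo (μ : Measure (ℕ → I)) [IsFiniteMeasure μ] {θ : (ℕ → I) → X}
    (hθ : Measurable θ) {w : Fin m → I} {i : ℕ → I} (hi : i ∈ cylW w) :
    infoFun μ θ m i ≤ localInfo ((μ.restrict (cylW w)).map θ) (μ.map θ) (θ i) := by
  have hκ : ∀ r, μ (θ ⁻¹' closedBall (θ i) r ∩ cyl i m)
      = (μ.restrict (cylW w)).map θ (closedBall (θ i) r) := fun r => by
    rw [cyl_eq_cylW hi, Measure.map_apply hθ measurableSet_closedBall,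
      Measure.restrict_apply (hθ measurableSet_closedBall)]
  have hν : ∀ r, μ (θ ⁻¹' closedBall (θ i) r) = μ.map θ (closedBall (θ i) r) := fun r =>
    (Measure.map_apply hθ measurableSet_closedBall).symm
  simp only [infoFun, hκ, hν]
  exact ofReal_neg_iInf_log_div_le_localInfo _ _ (θ i)

variable [SecondCountableTopology X] [MeasurableSingletonClass I] {N : ℕ} {τ : ℝ}

lemma setLIntegral_cylW_infoFun_le (hτ : 1 < τ) (hN : IsEmpty (Besicovitch.SatelliteConfig X N τ))
    {C : ℝ} (hNC : N ≤ C) (hC : 1 ≤ C) (μ : Measure (ℕ → I)) [IsProbabilityMeasure μ]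
    {θ : (ℕ → I) → X} (hθ : Measurable θ) (w : Fin m → I) :
    ∫⁻ i in cylW w, infoFun μ θ m i ∂μ ≤ ENNReal.ofReal (Real.negMulLog (μ (cylW w)).toReal +
      (μ (cylW w)).toReal * Real.log C + (μ (cylW w)).toReal) := by
  have := Measure.isProbabilityMeasure_map (μ := μ) hθ.aemeasurable
  set κ := (μ.restrict (cylW w)).map θ
  have hκ : κ univ = μ (cylW w) := by
    rw [Measure.map_apply hθ .univ, preimage_univ, Measure.restrict_apply_univ]
  calc ∫⁻ i in cylW w, infoFun μ θ m i ∂μ ≤ ∫⁻ i in cylW w, localInfo κ (μ.map θ) (θ i) ∂μ :=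
        setLIntegral_mono' (measurableSet_cylW w) fun i hi => infoFun_le_localInfo μ hθ hi
    _ = ∫⁻ x, localInfo κ (μ.map θ) x ∂κ := (lintegral_map (measurable_localInfo _ _) hθ).symm
    _ ≤ _ := hκ ▸ lintegral_localInfo_le hτ hN hNC κ (μ.map θ)
        (hκ ▸ measureReal_le_one.trans hC)

end Info

/-- with `C` the Besicovitch covering constant of `ℝ^d`, for any Borel probability
measure `μ` on `I^ℕ`, continuous `θ : I^ℕ → ℝ^d` and cylinder partition `P_m` with finite
entropy, the function `G(i) = -inf_{r>0} log ( μ(B^θ(i,r) ∩ [i|_m]) / μ(B^θ(i,r)) )`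
satisfies `∫ G dμ ≤ H_μ(P_m) + log C + 1 < ∞`. -/
theorem info_function_integrable (d : ℕ) :
    ∃ C : ℝ, 0 < C ∧
      ∀ (I : Type) [MeasurableSpace I] [MeasurableSingletonClass I] [Countable I]
        [TopologicalSpace I] [DiscreteTopology I]
        (μ : Measure (ℕ → I)), IsProbabilityMeasure μ →
        ∀ (θ : (ℕ → I) → EuclideanSpace ℝ (Fin d)), Continuous θ →
        ∀ m : ℕ,
          (Summable fun w : Fin m → I => Real.negMulLog ((μ (cylW w)).toReal)) →
          (∫⁻ i, ENNReal.ofReal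
              (-(⨅ r : {r : ℝ // 0 < r},
                  Real.log ((μ (θ ⁻¹' Metric.closedBall (θ i) r ∩ cyl i m)).toReal /
                    (μ (θ ⁻¹' Metric.closedBall (θ i) r)).toReal))) ∂μ)
            ≤ ENNReal.ofReal
                ((∑' w : Fin m → I, Real.negMulLog ((μ (cylW w)).toReal)) +
                  Real.log C + 1) := by
  obtain ⟨N, τ, hτ, hN⟩ :=
    HasBesicovitchCovering.no_satelliteConfig (α := EuclideanSpace ℝ (Fin d))
  have hC : 1 ≤ max (N : ℝ) 1 := le_max_right _ _
  refine ⟨max (N : ℝ) 1, one_pos.trans_le hC, fun I _ _ _ _ _ μ _ θ hθ m hH => ?_⟩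
  calc ∫⁻ i, infoFun μ θ m i ∂μ = ∑' w : Fin m → I, ∫⁻ i in cylW w, infoFun μ θ m i ∂μ :=
        lintegral_eq_tsum_setLIntegral_cylW μ _
    _ ≤ ∑' w : Fin m → I, ENNReal.ofReal (Real.negMulLog (μ (cylW w)).toReal +
          (μ (cylW w)).toReal * Real.log (max (N : ℝ) 1) + (μ (cylW w)).toReal) :=
        ENNReal.tsum_le_tsum fun w =>
          setLIntegral_cylW_infoFun_le hτ hN (le_max_left _ _) hC μ hθ.measurable w
    _ = _ := tsum_ofReal_negMulLog_add_mul_add (fun _ => ENNReal.toReal_nonneg)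
        (hasSum_toReal_measure_cylW μ) hH (Real.log_nonneg hC)
end
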